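/- arXiv:2212.05756 — 3 statements merged into one kernel-verified Lean document; each statement's English description precedes it below -/
import Mathlib

section
/- Let s be a real polynomial that is non-negative for all non-negative real x. Then there exist real polynomials a1, a2, a3, a4 with deg a1, deg a2 ≤ deg s and deg a3, deg a4 ≤ deg s − 1 such that s(x) = a1(x)^2 + a2(x)^2 + x·(a3(x)^2 + a4(x)^2) for all real x. -/
/-!
Substituting `x = y²` turns `s` into the polynomial `s(y²)`, which is non-negative on all
of `ℝ`. Such a polynomial is a sum of two squares `f² + g²`: peel off a factor
`(y - r)² + c²` coming from a complex root `r + ci` (a real root of a non-negative polynomial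
is a double root), and use that sums of two squares are closed under multiplication. Writing
`f = E(y²) + y·O(y²)` and `g = E'(y²) + y·O'(y²)` and averaging the identity at `y` and `-y`
gives `s(y²) = E(y²)² + E'(y²)² + y²·(O(y²)² + O'(y²)²)`; the degree bounds follow because
the leading coefficients of `f²` and `g²` cannot cancel.
-/

open Polynomial

namespace Polynomial

section Degree

variable {R : Type*} [CommRing R] [LinearOrder R] [IsStrictOrderedRing R]

theorem natDegree_sq_add_sq_of_natDegree_le {f g : R[X]} (hgf : g.natDegree ≤ f.natDegree) :
    (f ^ 2 + g ^ 2).natDegree = 2 * f.natDegree := by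
  refine le_antisymm (natDegree_add_le_of_degree_le ?_ ?_) ?_
  · exact natDegree_pow_le.trans (by omega)
  · exact natDegree_pow_le.trans (by omega)
  rcases eq_or_ne f 0 with rfl | hf
  · simp
  apply le_natDegree_of_ne_zero
  rw [coeff_add, coeff_pow_of_natDegree_le le_rfl, coeff_pow_of_natDegree_le hgf]
  have := leadingCoeff_ne_zero.mpr hf
  positivity

theorem natDegree_sq_add_sq (f g : R[X]) :
    (f ^ 2 + g ^ 2).natDegree = 2 * max f.natDegree g.natDegree := by
  rcases le_total g.natDegree f.natDegree with h | h
  · rw [natDegree_sq_add_sq_of_natDegree_le h, max_eq_left h]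
  · rw [add_comm, natDegree_sq_add_sq_of_natDegree_le h, max_eq_right h]

end Degree

section Parity

variable {R : Type*} [CommRing R]

theorem natDegree_contract_le {p : ℕ} (hp : p ≠ 0) (f : R[X]) :
    (contract p f).natDegree ≤ f.natDegree / p := by
  refine natDegree_le_iff_coeff_eq_zero.mpr fun n hn => ?_
  rw [coeff_contract hp]
  exact coeff_eq_zero_of_natDegree_lt ((Nat.div_lt_iff_lt_mul (Nat.pos_of_ne_zero hp)).mp hn)

noncomputable def evenPart (f : R[X]) : R[X] := contract 2 f

noncomputable def oddPart (f : R[X]) : R[X] := contract 2 f.divX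

theorem expand_evenPart_add_X_mul_expand_oddPart (f : R[X]) :
    expand R 2 (evenPart f) + X * expand R 2 (oddPart f) = f := by
  ext n
  rcases Nat.even_or_odd' n with ⟨k, rfl | rfl⟩
  · rcases k with _ | k
    · simp [evenPart, coeff_expand, coeff_contract]
    · rw [show 2 * (k + 1) = 2 * k + 1 + 1 by ring, coeff_add, coeff_X_mul]
      rw [coeff_expand two_pos, coeff_expand two_pos, if_pos ⟨k + 1, rfl⟩,
        if_neg (by omega), add_zero, evenPart, coeff_contract two_ne_zero]
      congr 1
      omega
  · simp [evenPart, oddPart, coeff_expand, coeff_contract, coeff_X_mul, mul_comm]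

theorem natDegree_evenPart_le (f : R[X]) : (evenPart f).natDegree ≤ f.natDegree / 2 :=
  natDegree_contract_le two_ne_zero f

theorem natDegree_oddPart_le (f : R[X]) : (oddPart f).natDegree ≤ (f.natDegree - 1) / 2 :=
  natDegree_divX_eq_natDegree_tsub_one (p := f) ▸ natDegree_contract_le two_ne_zero f.divX

theorem expand_two_comp_neg_X (f : R[X]) : (expand R 2 f).comp (-X) = expand R 2 f := by
  rw [expand_eq_comp_X_pow, comp_assoc]
  simp

theorem comp_neg_X_eq_expand_evenPart_sub (f : R[X]) :
    f.comp (-X) = expand R 2 (evenPart f) - X * expand R 2 (oddPart f) := by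
  conv_lhs => rw [← expand_evenPart_add_X_mul_expand_oddPart f]
  rw [add_comp, mul_comp, expand_two_comp_neg_X, expand_two_comp_neg_X, X_comp]
  ring

end Parity

theorem eq_evenPart_sq_add_sq_add_X_mul {R : Type*} [CommRing R] [IsDomain R] [CharZero R]
    {s f g : R[X]} (h : expand R 2 s = f ^ 2 + g ^ 2) :
    s = evenPart f ^ 2 + evenPart g ^ 2 + X * (oddPart f ^ 2 + oddPart g ^ 2) := by
  have h_neg : expand R 2 s = f.comp (-X) ^ 2 + g.comp (-X) ^ 2 := by
    rw [← expand_two_comp_neg_X, h, add_comp, pow_comp, pow_comp]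
  rw [comp_neg_X_eq_expand_evenPart_sub, comp_neg_X_eq_expand_evenPart_sub] at h_neg
  rw [← expand_evenPart_add_X_mul_expand_oddPart f,
    ← expand_evenPart_add_X_mul_expand_oddPart g] at h
  apply expand_injective two_pos
  apply mul_left_cancel₀ (two_ne_zero (α := R[X]))
  simp only [map_add, map_mul, map_pow, expand_X]
  linear_combination h + h_neg

theorem eval_nonneg_of_eval_mul_nonneg {q t : ℝ[X]} (hq : q ≠ 0)
    (hq_nonneg : ∀ x, 0 ≤ q.eval x) (h : ∀ x, 0 ≤ (q * t).eval x) (x : ℝ) :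
    0 ≤ t.eval x := by
  have h_dense : Dense {x | q.eval x ≠ 0} :=
    (finite_setOfPred_isRoot hq).countable.dense_compl ℝ
  have h_sub : {x | q.eval x ≠ 0} ⊆ {x | 0 ≤ t.eval x} := fun y hy => by
    have := h y
    rw [eval_mul] at this
    exact (mul_nonneg_iff_of_pos_left (lt_of_le_of_ne (hq_nonneg y) (Ne.symm hy))).mp this
  have h_closed : IsClosed {x | 0 ≤ t.eval x} := isClosed_le continuous_const t.continuous
  exact closure_minimal h_sub h_closed (h_dense x)

theorem sq_X_sub_C_dvd_of_isLocalMin {p : ℝ[X]} {r : ℝ} (hr : p.IsRoot r)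
    (hmin : IsLocalMin (fun x => p.eval x) r) : (X - C r) ^ 2 ∣ p := by
  rcases eq_or_ne p 0 with rfl | hp
  · simp
  have h_deriv : p.derivative.IsRoot r := by
    simpa [Polynomial.deriv] using hmin.deriv_eq_zero
  rw [← le_rootMultiplicity_iff hp]
  exact (one_lt_rootMultiplicity_iff_isRoot hp).mpr ⟨hr, h_deriv⟩

theorem exists_sq_add_sq_dvd_of_nonneg {p : ℝ[X]} (hp : ∀ x, 0 ≤ p.eval x)
    (h_deg : 0 < p.natDegree) : ∃ r c : ℝ, (X - C r) ^ 2 + C c ^ 2 ∣ p := by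
  obtain ⟨z, hz⟩ := IsAlgClosed.exists_aeval_eq_zero ℂ p (by
    rw [degree_eq_natDegree (ne_zero_of_natDegree_gt h_deg)]; exact_mod_cast h_deg.ne')
  by_cases him : z.im = 0
  · have h_root : p.IsRoot z.re := isRoot_of_aeval_algebraMap_eq_zero (by
      rwa [Complex.coe_algebraMap, show (z.re : ℂ) = z from Complex.ext rfl (by simp [him])])
    refine ⟨z.re, 0, ?_⟩
    rw [map_zero, zero_pow two_ne_zero, add_zero]
    refine sq_X_sub_C_dvd_of_isLocalMin h_root (Filter.Eventually.of_forall fun x => ?_)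
    show p.eval z.re ≤ p.eval x
    rw [h_root.eq_zero]
    exact hp x
  · refine ⟨z.re, z.im, ?_⟩
    convert quadratic_dvd_of_aeval_eq_zero_im_ne_zero p hz him using 1
    rw [Complex.sq_norm, Complex.normSq_apply]
    simp only [map_add, map_mul, map_ofNat]
    ring

theorem exists_eq_sq_add_sq_of_nonneg {p : ℝ[X]} (hp : ∀ x, 0 ≤ p.eval x) :
    ∃ f g : ℝ[X], p = f ^ 2 + g ^ 2 := by
  induction hn : p.natDegree using Nat.strong_induction_on generalizing p with
  | _ n ih =>
  rcases Nat.eq_zero_or_pos n with rfl | hpos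
  · refine ⟨C √(p.coeff 0), 0, ?_⟩
    rw [← C_pow, Real.sq_sqrt (coeff_zero_eq_eval_zero p ▸ hp 0), eq_C_of_natDegree_eq_zero hn]
    simp
  obtain ⟨r, c, t, rfl⟩ := exists_sq_add_sq_dvd_of_nonneg hp (hn ▸ hpos)
  set q : ℝ[X] := (X - C r) ^ 2 + C c ^ 2
  have hq_nonneg : ∀ x, 0 ≤ q.eval x := fun x => by
    simp only [q, eval_add, eval_pow, eval_sub, eval_X, eval_C]
    positivity
  have hq_deg : q.natDegree = 2 := by simp only [q]; compute_degree!
  have hq0 : q ≠ 0 := by rintro h; simp [h] at hq_deg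
  have ht0 : t ≠ 0 := by rintro rfl; rw [mul_zero, natDegree_zero] at hn; omega
  obtain ⟨f, g, rfl⟩ := ih t.natDegree (by rw [← hn, natDegree_mul hq0 ht0]; omega)
    (eval_nonneg_of_eval_mul_nonneg hq0 hq_nonneg hp) rfl
  exact ⟨(X - C r) * f - C c * g, (X - C r) * g + C c * f, sq_add_sq_mul_sq_add_sq ..⟩

end Polynomial

/-- Pólya–Szegő: a real polynomial non-negative on `[0,∞)` is of the form
`a1² + a2² + X·(a3² + a4²)` with degree bounds. -/
theorem polya_szego_representation (s : Polynomial ℝ)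
    (hs : ∀ x : ℝ, 0 ≤ x → 0 ≤ s.eval x) :
    ∃ a1 a2 a3 a4 : Polynomial ℝ,
      a1.natDegree ≤ s.natDegree ∧ a2.natDegree ≤ s.natDegree ∧
      a3.natDegree ≤ s.natDegree - 1 ∧ a4.natDegree ≤ s.natDegree - 1 ∧
      ∀ x : ℝ, s.eval x =
        (a1.eval x) ^ 2 + (a2.eval x) ^ 2 +
          x * ((a3.eval x) ^ 2 + (a4.eval x) ^ 2) := by
  obtain ⟨f, g, h⟩ := exists_eq_sq_add_sq_of_nonneg (p := expand ℝ 2 s) fun x => by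
    rw [expand_eval]
    exact hs _ (sq_nonneg x)
  have h_deg : max f.natDegree g.natDegree = s.natDegree := by
    have := congrArg natDegree h
    rw [natDegree_expand, natDegree_sq_add_sq] at this
    omega
  refine ⟨evenPart f, evenPart g, oddPart f, oddPart g, ?_, ?_, ?_, ?_, fun x => ?_⟩
  · exact (natDegree_evenPart_le f).trans (by omega)
  · exact (natDegree_evenPart_le g).trans (by omega)
  · exact (natDegree_oddPart_le f).trans (by omega)
  · exact (natDegree_oddPart_le g).trans (by omega)
  · conv_lhs => rw [eq_evenPart_sq_add_sq_add_X_mul h]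
    simp
end

section
/- Let s be a real polynomial with s(x) ≥ 0 for all x ∈ ℝ. Then there exist real polynomials a1, a2 such that s(x) = a1(x)^2 + a2(x)^2 for all real x. -/
/-!
Induct on the degree. A complex root `z` of `s` yields the real quadratic
`q = (X - Re z)² + (Im z)²`, which divides `s`: for non-real `z` it is `(X - z)(X - z̄)`, and a
real root is a minimum of `s`, hence a double root. Since `q > 0` off a single point, the quotient
is again nonnegative by continuity, and the Brahmagupta–Fibonacci identity shows that sums of two
squares are closed under multiplication.
-/

open Polynomial

theorem Continuous.nonneg_of_nonneg_of_ne {f : ℝ → ℝ} (hf : Continuous f) {r : ℝ}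
    (h : ∀ x ≠ r, 0 ≤ f x) (x : ℝ) : 0 ≤ f x := by
  have : closure {r}ᶜ ⊆ {x | 0 ≤ f x} :=
    (isClosed_le continuous_const hf).closure_subset_iff.2 h
  exact this ((dense_compl_singleton r).closure_eq ▸ Set.mem_univ x)

namespace Polynomial

theorem sq_X_sub_C_dvd_of_isRoot_of_nonneg {s : ℝ[X]} {r : ℝ} (hs : ∀ x, 0 ≤ s.eval x)
    (hr : s.IsRoot r) : (X - C r) ^ 2 ∣ s := by
  rcases eq_or_ne s 0 with rfl | hs0
  · exact dvd_zero _
  have hmin : IsLocalMin (fun x ↦ s.eval x) r :=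
    Filter.Eventually.of_forall fun x ↦ by simpa [hr.eq_zero] using hs x
  have hderiv : (derivative s).IsRoot r := by
    simpa only [IsRoot.def, Polynomial.deriv] using hmin.deriv_eq_zero
  rw [← le_rootMultiplicity_iff hs0]
  exact (one_lt_rootMultiplicity_iff_isRoot hs0).2 ⟨hr, hderiv⟩

/-- The real quadratic `(X - z)(X - conj z)`. -/
noncomputable def normSqXSubC (z : ℂ) : ℝ[X] := (X - C z.re) ^ 2 + C z.im ^ 2

theorem eval_normSqXSubC (z : ℂ) (x : ℝ) :
    (normSqXSubC z).eval x = (x - z.re) ^ 2 + z.im ^ 2 := by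
  simp [normSqXSubC]

theorem monic_normSqXSubC (z : ℂ) : (normSqXSubC z).Monic := by
  unfold normSqXSubC
  refine ((monic_X_sub_C _).pow 2).add_of_left ?_
  rw [← C_pow, degree_pow, degree_X_sub_C]
  exact degree_C_le.trans_lt (by norm_num)

theorem natDegree_normSqXSubC (z : ℂ) : (normSqXSubC z).natDegree = 2 := by
  unfold normSqXSubC
  rw [← C_pow, natDegree_add_C, natDegree_pow, natDegree_X_sub_C]

theorem normSqXSubC_dvd_of_aeval_eq_zero_of_nonneg {s : ℝ[X]} (hs : ∀ x, 0 ≤ s.eval x) {z : ℂ}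
    (hz : aeval z s = 0) : normSqXSubC z ∣ s := by
  rcases eq_or_ne z.im 0 with him | him
  · have hr : s.IsRoot z.re := by
      rw [← Complex.re_add_im z, him, Complex.ofReal_zero, zero_mul, add_zero,
        ← Complex.coe_algebraMap, aeval_algebraMap_apply_eq_algebraMap_eval] at hz
      simpa using hz
    simpa [normSqXSubC, him] using sq_X_sub_C_dvd_of_isRoot_of_nonneg hs hr
  · convert quadratic_dvd_of_aeval_eq_zero_im_ne_zero s hz him using 1
    rw [normSqXSubC, Complex.sq_norm, Complex.normSq_apply]
    simp only [C_add, C_mul, map_ofNat]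
    ring

theorem exists_eq_sq_add_sq_of_nonneg_s1 (s : ℝ[X]) (hs : ∀ x, 0 ≤ s.eval x) :
    ∃ a b : ℝ[X], s = a ^ 2 + b ^ 2 := by
  induction hn : s.natDegree using Nat.strong_induction_on generalizing s with
  | _ n ih =>
  rcases eq_or_ne n 0 with rfl | hn0
  · obtain ⟨c, rfl⟩ := natDegree_eq_zero.1 hn
    refine ⟨C √c, 0, ?_⟩
    rw [← C_pow, Real.sq_sqrt (by simpa using hs 0)]
    ring
  have hs0 : s ≠ 0 := by rintro rfl; simp_all
  obtain ⟨z, hz⟩ := IsAlgClosed.exists_aeval_eq_zero ℂ s (by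
    rw [degree_eq_natDegree hs0]; exact_mod_cast hn ▸ hn0)
  obtain ⟨t, rfl⟩ := normSqXSubC_dvd_of_aeval_eq_zero_of_nonneg hs hz
  have ht0 : t ≠ 0 := right_ne_zero_of_mul hs0
  have hdeg : n = 2 + t.natDegree := by
    rw [← hn, natDegree_mul (monic_normSqXSubC z).ne_zero ht0, natDegree_normSqXSubC]
  have ht : ∀ x, 0 ≤ t.eval x := t.continuous.nonneg_of_nonneg_of_ne fun x hx ↦ by
    have hq : 0 < (normSqXSubC z).eval x := by
      rw [eval_normSqXSubC]
      have := sub_ne_zero.2 hx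
      positivity
    have hqt := hs x
    rw [eval_mul] at hqt
    exact nonneg_of_mul_nonneg_right hqt hq
  obtain ⟨a, b, rfl⟩ := ih t.natDegree (by omega) t ht rfl
  exact ⟨_, _, by rw [normSqXSubC]; exact sq_add_sq_mul_sq_add_sq⟩

end Polynomial

/-- A real polynomial non-negative on all of `ℝ` is a sum of two squares of polynomials. -/
theorem nonneg_poly_sum_two_squares (s : Polynomial ℝ)
    (hs : ∀ x : ℝ, 0 ≤ s.eval x) :
    ∃ a1 a2 : Polynomial ℝ, ∀ x : ℝ,
      s.eval x = (a1.eval x) ^ 2 + (a2.eval x) ^ 2 := by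
  obtain ⟨a, b, rfl⟩ := s.exists_eq_sq_add_sq_of_nonneg_s1 hs
  exact ⟨a, b, fun x ↦ by simp⟩
end

section
/- Let z be a complex number with nonzero imaginary part and negative real part, and let x be real. Then (1 − x/z)·(1 − x/conj(z)) = ((x − max(Re z, 0))^2 + (min(Re z, 0))^2 + (Im z)^2)/|z|^2 + x·(−2·min(Re z, 0)/|z|^2), and both the constant-in-x expressions ((x − max(Re z,0))^2 + (min(Re z,0))^2 + (Im z)^2)/|z|^2 and −2·min(Re z,0)/|z|^2 are non-negative for all real x. -/
open Complex

/- Since `z · conj z = |z|²` and `(z - x) · conj (z - x) = |z - x|²` for real `x`, the product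
equals `((x - Re z)² + (Im z)²) / |z|²`. Splitting `Re z` into its positive and negative parts
moves the cross term `-2 x · min (Re z) 0`, which has a non-negative coefficient, out of the
square. -/

theorem one_sub_div_mul_one_sub_div_conj {z : ℂ} (hz : z ≠ 0) (x : ℝ) :
    (1 - (x : ℂ) / z) * (1 - (x : ℂ) / starRingEnd ℂ z) =
      (((x - z.re) ^ 2 + z.im ^ 2) / normSq z : ℝ) := by
  have hconj : starRingEnd ℂ z ≠ 0 := (map_ne_zero _).2 hz
  calc (1 - (x : ℂ) / z) * (1 - (x : ℂ) / starRingEnd ℂ z)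
      = (z - x) * starRingEnd ℂ (z - x) / (z * starRingEnd ℂ z) := by
        field_simp
        simp
    _ = (normSq (z - x) / normSq z : ℝ) := by
        rw [mul_conj, mul_conj, ofReal_div]
    _ = (((x - z.re) ^ 2 + z.im ^ 2) / normSq z : ℝ) := by
        rw [normSq_apply, sub_re, sub_im, ofReal_re, ofReal_im]
        congr 2
        ring

theorem sq_sub_eq_sq_sub_max_add_sq_min (x a : ℝ) :
    (x - a) ^ 2 = (x - max a 0) ^ 2 + min a 0 ^ 2 + x * (-2 * min a 0) := by
  rcases le_total a 0 with ha | ha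
  · rw [max_eq_right ha, min_eq_left ha]; ring
  · rw [max_eq_left ha, min_eq_right ha]; ring

theorem conj_pair_factor_decomposition_general (z : ℂ) (hz : z.im ≠ 0)
    (x : ℝ) :
    (1 - (x : ℂ) / z) * (1 - (x : ℂ) / (starRingEnd ℂ z)) =
      ((((x - max z.re 0) ^ 2 + (min z.re 0) ^ 2 + z.im ^ 2) / Complex.normSq z : ℝ) : ℂ) +
        (x : ℂ) * (((-2 * min z.re 0 / Complex.normSq z : ℝ)) : ℂ) ∧
    0 ≤ ((x - max z.re 0) ^ 2 + (min z.re 0) ^ 2 + z.im ^ 2) / Complex.normSq z ∧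
    0 ≤ -2 * min z.re 0 / Complex.normSq z := by
  have hz0 : z ≠ 0 := fun h => hz (by simp [h])
  refine ⟨?_, div_nonneg (by positivity) (normSq_nonneg z), div_nonneg ?_ (normSq_nonneg z)⟩
  · rw [one_sub_div_mul_one_sub_div_conj hz0, sq_sub_eq_sq_sub_max_add_sq_min]
    push_cast
    ring
  · linarith [min_le_right z.re 0]

/-- Rewriting a conjugate pair of linear factors with `Re z < 0` in the form
`b1(x) + x·b2(x)` with `b1, b2` pointwise non-negative. -/
theorem conj_pair_factor_decomposition (z : ℂ) (hz : z.im ≠ 0) (hre : z.re < 0)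
    (x : ℝ) :
    (1 - (x : ℂ) / z) * (1 - (x : ℂ) / (starRingEnd ℂ z)) =
      ((((x - max z.re 0) ^ 2 + (min z.re 0) ^ 2 + z.im ^ 2) / Complex.normSq z : ℝ) : ℂ) +
        (x : ℂ) * (((-2 * min z.re 0 / Complex.normSq z : ℝ)) : ℂ) ∧
    0 ≤ ((x - max z.re 0) ^ 2 + (min z.re 0) ^ 2 + z.im ^ 2) / Complex.normSq z ∧
    0 ≤ -2 * min z.re 0 / Complex.normSq z :=
  conj_pair_factor_decomposition_general z hz x
end
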